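/- arXiv:2311.08012 — 10 statements merged into one kernel-verified Lean document; each statement's English description precedes it below -/
import Mathlib

section
/- No Lucas-Carmichael integer has exactly two prime factors; equivalently, if n = p*q with p, q distinct primes, then n is not a Lucas-Carmichael integer. -/
def LucasCarmichael (n : ℕ) : Prop :=
  Squarefree n ∧ 1 < n ∧ ¬ n.Prime ∧
    ∀ p : ℕ, p.Prime → p ∣ n → p + 1 ∣ n + 1

lemma aux_lc (p q : ℕ) (hp : p.Prime) (h : p < q) : ¬ (q + 1 ∣ p * q + 1) := by
  intro hd
  have h1 : q + 1 ∣ p * (q + 1) := Dvd.intro_left p rfl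
  have h2 : q + 1 ∣ p * (q + 1) - (p * q + 1) := Nat.dvd_sub h1 hd
  have he : p * (q + 1) - (p * q + 1) = p - 1 := by
    have := hp.two_le; cases p with
    | zero => omega
    | succ n => ring_nf; omega
  rw [he] at h2
  have h3 := Nat.le_of_dvd (by have := hp.two_le; omega) h2
  have := hp.two_le
  omega

theorem lucasCarmichael_not_two_primes (p q : ℕ) (hp : p.Prime) (hq : q.Prime)
    (hpq : p ≠ q) : ¬ LucasCarmichael (p * q) := by
  rintro ⟨_, _, _, hdvd⟩
  rcases lt_or_gt_of_ne hpq with h | h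
  · exact aux_lc p q hp h (hdvd q hq (Dvd.intro_left p rfl))
  · have := hdvd p hp (Dvd.intro q rfl)
    rw [mul_comm] at this
    exact aux_lc q p hq h this
end

section
/- Every prime factor p of a Lucas-Carmichael integer n satisfies p² < n, i.e. p < √n. -/
theorem lucasCarmichael_prime_lt_sqrt (n p : ℕ) (h : LucasCarmichael n)
    (hp : p.Prime) (hpn : p ∣ n) : p ^ 2 < n := by
  obtain ⟨hsf, hn1, hnp, hdvd⟩ := h
  obtain ⟨m, hm⟩ := hpn
  have hd : p + 1 ∣ n + 1 := hdvd p hp ⟨m, hm⟩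
  have hm0 : m ≠ 0 := by rintro rfl; simp at hm; omega
  have hm1 : m ≠ 1 := by rintro rfl; simp at hm; exact hnp (hm ▸ hp)
  have hm2 : 2 ≤ m := by omega
  have hdm : p + 1 ∣ m - 1 := by
    have h1 : p + 1 ∣ m * (p + 1) := Dvd.intro m (mul_comm _ _)
    have h2 : m * (p + 1) - (n + 1) = m - 1 := by subst hm; ring_nf; omega
    exact h2 ▸ Nat.dvd_sub h1 hd
  have hle : p + 1 ≤ m - 1 := Nat.le_of_dvd (by omega) hdm
  have hp2 : 2 ≤ p := hp.two_le
  have hge : p + 2 ≤ m := by omega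
  have : p ^ 2 < p * m := by nlinarith
  omega
end

section
/- If n = m*q*r is a Lucas-Carmichael integer, where m is a positive integer and q, r are primes with q < r, then q < 3m² and r < 3m³. -/
theorem lucasCarmichael_factor_bounds (m q r : ℕ) (hm : 0 < m)
    (hq : q.Prime) (hr : r.Prime) (hqr : q < r)
    (h : LucasCarmichael (m * q * r)) :
    q < 3 * m ^ 2 ∧ r < 3 * m ^ 3 := by
  obtain ⟨-, -, -, hdvd⟩ := h
  have hqd : q + 1 ∣ m * q * r + 1 := hdvd q hq ⟨m * r, by ring⟩
  have hrd : r + 1 ∣ m * q * r + 1 := hdvd r hr ⟨m * q, by ring⟩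
  -- pass to integers
  have hqd' : ((q : ℤ) + 1) ∣ (m : ℤ) * r - 1 := by
    have h1 : ((q : ℤ) + 1) ∣ ((m : ℤ) * q * r + 1) := by exact_mod_cast hqd
    have h2 : ((q : ℤ) + 1) ∣ (m : ℤ) * r * (q + 1) := ⟨(m : ℤ) * r, by ring⟩
    have := h2.sub h1
    have heq : (m : ℤ) * r * (q + 1) - ((m : ℤ) * q * r + 1) = (m : ℤ) * r - 1 := by ring
    rwa [heq] at this
  have hrd' : ((r : ℤ) + 1) ∣ (m : ℤ) * q - 1 := by
    have h1 : ((r : ℤ) + 1) ∣ ((m : ℤ) * q * r + 1) := by exact_mod_cast hrd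
    have h2 : ((r : ℤ) + 1) ∣ (m : ℤ) * q * (r + 1) := ⟨(m : ℤ) * q, by ring⟩
    have := h2.sub h1
    have heq : (m : ℤ) * q * (r + 1) - ((m : ℤ) * q * r + 1) = (m : ℤ) * q - 1 := by ring
    rwa [heq] at this
  obtain ⟨s, hs⟩ := hqd'
  obtain ⟨t, ht⟩ := hrd'
  have hm' : (1 : ℤ) ≤ (m : ℤ) := by exact_mod_cast hm
  have hq2 : (2 : ℤ) ≤ (q : ℤ) := by exact_mod_cast hq.two_le
  have hr2 : (2 : ℤ) ≤ (r : ℤ) := by exact_mod_cast hr.two_le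
  have hqr' : (q : ℤ) < (r : ℤ) := by exact_mod_cast hqr
  -- s ≥ 1
  have hs1 : (1 : ℤ) ≤ s := by nlinarith [mul_pos (by linarith : (0:ℤ) < (q:ℤ)+1) (by linarith : (0:ℤ) < 1)]
  -- t ≥ 1
  have ht1 : (1 : ℤ) ≤ t := by nlinarith
  -- t ≤ m - 1
  have htm : t ≤ (m : ℤ) - 1 := by nlinarith
  -- key identity
  have key : ((q : ℤ) + 1) * ((m : ℤ) ^ 2 - t * s) = ((m : ℤ) + 1) * ((m : ℤ) + t) := by
    linear_combination (m : ℤ) * ht + t * hs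
  -- m^2 - t*s ≥ 1
  have hpos : (1 : ℤ) ≤ (m : ℤ) ^ 2 - t * s := by
    by_contra hcon
    push_neg at hcon
    have : ((q : ℤ) + 1) * ((m : ℤ) ^ 2 - t * s) ≤ 0 := by
      apply mul_nonpos_of_nonneg_of_nonpos <;> linarith
    nlinarith
  -- q + 1 ≤ (m+1)(m+t) ≤ (m+1)(2m-1)
  have hqbound : (q : ℤ) + 1 ≤ ((m : ℤ) + 1) * (2 * m - 1) := by
    have h1 : (q : ℤ) + 1 ≤ ((m : ℤ) + 1) * ((m : ℤ) + t) := by nlinarith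
    nlinarith
  have hqlt : (q : ℤ) < 3 * (m : ℤ) ^ 2 := by nlinarith
  have hrbound : (r : ℤ) + 1 ≤ (m : ℤ) * q - 1 := by nlinarith
  constructor
  · exact_mod_cast hqlt
  · have : (r : ℤ) < 3 * (m : ℤ) ^ 3 := by nlinarith
    exact_mod_cast this
end

section
/- Let m ≥ 8 be an integer, p = 6m−1, and n = (6m−1)(12m−1)(18m−1). Then the sum of the base-(p+2) digits of n+2 equals 2p+3. -/
lemma digits_four (b d0 d1 d2 d3 : ℕ) (hb : 1 < b) (h0 : d0 < b) (h1 : d1 < b)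
    (h2 : d2 < b) (h3 : 0 < d3) (h3' : d3 < b) :
    Nat.digits b (d0 + b * (d1 + b * (d2 + b * d3))) = [d0, d1, d2, d3] := by
  have hbpos : 0 < b := by omega
  have p3 : 0 < d3 := h3
  have p2 : 0 < d2 + b * d3 := by positivity
  have p1 : 0 < d1 + b * (d2 + b * d3) := by positivity
  have p0 : 0 < d0 + b * (d1 + b * (d2 + b * d3)) := by positivity
  rw [Nat.digits_def' hb p0, Nat.add_mul_mod_self_left, Nat.mod_eq_of_lt h0,
    Nat.add_mul_div_left _ _ hbpos, Nat.div_eq_of_lt h0, zero_add,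
    Nat.digits_def' hb p1, Nat.add_mul_mod_self_left, Nat.mod_eq_of_lt h1,
    Nat.add_mul_div_left _ _ hbpos, Nat.div_eq_of_lt h1, zero_add,
    Nat.digits_def' hb p2, Nat.add_mul_mod_self_left, Nat.mod_eq_of_lt h2,
    Nat.add_mul_div_left _ _ hbpos, Nat.div_eq_of_lt h2, zero_add,
    Nat.digits_def' hb p3, Nat.mod_eq_of_lt h3', Nat.div_eq_of_lt h3',
    Nat.digits_zero]

theorem digit_sum_p (m : ℕ) (hm : 8 ≤ m) :
    (Nat.digits (6 * m - 1 + 2) ((6 * m - 1) * (12 * m - 1) * (18 * m - 1) + 2)).sum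
      = 2 * (6 * m - 1) + 3 := by
  obtain ⟨k, rfl⟩ := Nat.exists_eq_add_of_le hm
  have e1 : 6 * (8 + k) - 1 = 47 + 6 * k := by omega
  have e2 : 12 * (8 + k) - 1 = 95 + 12 * k := by omega
  have e3 : 18 * (8 + k) - 1 = 143 + 18 * k := by omega
  rw [e1, e2, e3]
  have key : (47 + 6 * k) * (95 + 12 * k) * (143 + 18 * k) + 2
      = (27 + 6 * k) + (49 + 6 * k) * (45 + (49 + 6 * k) * ((20 + 6 * k) + (49 + 6 * k) * 5)) := by
    ring
  have hb : 47 + 6 * k + 2 = 49 + 6 * k := by omega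
  rw [hb, key, digits_four _ _ _ _ _ (by omega) (by omega) (by omega) (by omega) (by omega) (by omega)]
  simp
  omega
end

section
/- Let m ≥ 8 be an integer, q = 12m−1, and n = (6m−1)(12m−1)(18m−1). Then the sum of the base-(q+2) digits of n+2 equals 2q+3. -/
theorem digit_sum_q (m : ℕ) (hm : 8 ≤ m) :
    (Nat.digits (12 * m - 1 + 2) ((6 * m - 1) * (12 * m - 1) * (18 * m - 1) + 2)).sum
      = 2 * (12 * m - 1) + 3 := by
  obtain ⟨k, rfl⟩ : ∃ k, m = k + 8 := ⟨m - 8, by omega⟩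
  have hb : 12 * (k + 8) - 1 + 2 = 12 * k + 97 := by omega
  have hN : (6 * (k + 8) - 1) * (12 * (k + 8) - 1) * (18 * (k + 8) - 1) + 2
      = (6 * k + 43) + (12 * k + 97) * ((9 * k + 83) + (12 * k + 97) * (9 * k + 67)) := by
    have h1 : 6 * (k + 8) - 1 = 6 * k + 47 := by omega
    have h2 : 12 * (k + 8) - 1 = 12 * k + 95 := by omega
    have h3 : 18 * (k + 8) - 1 = 18 * k + 143 := by omega
    rw [h1, h2, h3]; ring
  rw [hb, hN]
  rw [Nat.digits_def' (by omega : 1 < 12 * k + 97) (by positivity)]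
  rw [Nat.add_mul_mod_self_left, Nat.add_mul_div_left _ _ (by omega : 0 < 12 * k + 97),
    Nat.mod_eq_of_lt (by omega), Nat.div_eq_of_lt (by omega), Nat.zero_add]
  rw [Nat.digits_def' (by omega : 1 < 12 * k + 97) (by positivity)]
  rw [Nat.add_mul_mod_self_left, Nat.add_mul_div_left _ _ (by omega : 0 < 12 * k + 97),
    Nat.mod_eq_of_lt (by omega), Nat.div_eq_of_lt (by omega), Nat.zero_add]
  rw [Nat.digits_def' (by omega : 1 < 12 * k + 97) (by positivity)]
  rw [Nat.mod_eq_of_lt (by omega), Nat.div_eq_of_lt (by omega), Nat.digits_zero]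
  simp only [List.sum_cons, List.sum_nil]
  omega
end

section
/- Let m ≥ 8 be an integer, r = 18m−1, and n = (6m−1)(12m−1)(18m−1). Then the sum of the base-(r+2) digits of n+2 equals r+2. -/
lemma dig_cons (b d M : ℕ) (hb : 2 ≤ b) (hd : d < b) (hM : 0 < M) :
    Nat.digits b (d + b * M) = d :: Nat.digits b M := by
  rw [Nat.digits_def' (by omega : 1 < b) (by positivity)]
  simp [Nat.add_mul_mod_self_left, Nat.mod_eq_of_lt hd,
    Nat.add_mul_div_left _ _ (by omega : 0 < b), Nat.div_eq_of_lt hd]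

lemma dig_single (b d : ℕ) (hb : 2 ≤ b) (hd : d < b) (hd0 : 0 < d) :
    Nat.digits b d = [d] := by
  rw [Nat.digits_def' (by omega : 1 < b) hd0, Nat.div_eq_of_lt hd,
    Nat.mod_eq_of_lt hd, Nat.digits_zero]

theorem digit_sum_r (m : ℕ) (hm : 8 ≤ m) :
    (Nat.digits (18 * m - 1 + 2) ((6 * m - 1) * (12 * m - 1) * (18 * m - 1) + 2)).sum
      = (18 * m - 1) + 2 := by
  obtain ⟨k, rfl⟩ : ∃ k, m = k + 8 := ⟨m - 8, by omega⟩
  have h1 : 6 * (k + 8) - 1 = 6 * k + 47 := by omega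
  have h2 : 12 * (k + 8) - 1 = 12 * k + 95 := by omega
  have h3 : 18 * (k + 8) - 1 = 18 * k + 143 := by omega
  rw [h1, h2, h3]
  have key : (6 * k + 47) * (12 * k + 95) * (18 * k + 143) + 2
      = (8 * k + 62) + (18 * k + 143 + 2) *
        ((6 * k + 53) + (18 * k + 143 + 2) * (4 * k + 30)) := by ring
  rw [key, dig_cons _ _ _ (by omega) (by omega) (by positivity),
    dig_cons _ _ _ (by omega) (by omega) (by positivity),
    dig_single _ _ (by omega) (by omega) (by omega)]
  simp; omega
end

section
/- If m ≥ 8 is an integer such that 6m−1, 12m−1 and 18m−1 are all prime, then n = (6m−1)(12m−1)(18m−1) is a Lucas-Carmichael integer. -/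
theorem chernick_lucasCarmichael (m : ℕ) (hm : 8 ≤ m)
    (h1 : (6 * m - 1).Prime) (h2 : (12 * m - 1).Prime) (h3 : (18 * m - 1).Prime) :
    LucasCarmichael ((6 * m - 1) * (12 * m - 1) * (18 * m - 1)) := by
  have e1 : 1 ≤ 6 * m := by omega
  have e2 : 1 ≤ 12 * m := by omega
  have e3 : 1 ≤ 18 * m := by omega
  have hab : (6 * m - 1) ≠ (12 * m - 1) := by omega
  have hac : (6 * m - 1) ≠ (18 * m - 1) := by omega
  have hbc : (12 * m - 1) ≠ (18 * m - 1) := by omega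
  have cab : Nat.Coprime (6 * m - 1) (12 * m - 1) := (Nat.coprime_primes h1 h2).2 hab
  have cac : Nat.Coprime (6 * m - 1) (18 * m - 1) := (Nat.coprime_primes h1 h3).2 hac
  have cbc : Nat.Coprime (12 * m - 1) (18 * m - 1) := (Nat.coprime_primes h2 h3).2 hbc
  have a2 := h1.two_le
  have b2 := h2.two_le
  have c2 := h3.two_le
  refine ⟨?_, ?_, ?_, ?_⟩
  · exact (Nat.squarefree_mul (Nat.Coprime.mul cac cbc)).2
      ⟨(Nat.squarefree_mul cab).2 ⟨h1.squarefree, h2.squarefree⟩, h3.squarefree⟩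
  · calc 1 < 2 * 2 * 2 := by norm_num
      _ ≤ (6 * m - 1) * (12 * m - 1) * (18 * m - 1) := by
          exact Nat.mul_le_mul (Nat.mul_le_mul a2 b2) c2
  · intro hp
    rcases hp.eq_one_or_self_of_dvd ((6 * m - 1) * (12 * m - 1)) ⟨_, rfl⟩ with h | h
    · nlinarith
    · have h2' : (6 * m - 1) * (12 * m - 1) * 2 ≤ (6 * m - 1) * (12 * m - 1) * (18 * m - 1) :=
        Nat.mul_le_mul_left _ c2
      nlinarith
  · intro p pp hdvd
    have key : ∀ k q : ℕ, k ∣ (6 * m - 1) * (12 * m - 1) * (18 * m - 1) + 1 →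
        p + 1 = k → p + 1 ∣ (6 * m - 1) * (12 * m - 1) * (18 * m - 1) + 1 := by
      intro k q hk he; rw [he]; exact hk
    rcases (Nat.Prime.dvd_mul pp).mp hdvd with hd | hd
    · rcases (Nat.Prime.dvd_mul pp).mp hd with hd' | hd'
      · have hp1 : p = 6 * m - 1 := (Nat.prime_dvd_prime_iff_eq pp h1).mp hd'
        have : p + 1 = 6 * m := by omega
        rw [this]
        zify [e1, e2, e3]
        exact ⟨216 * (m : ℤ) ^ 2 - 66 * m + 6, by ring⟩
      · have hp1 : p = 12 * m - 1 := (Nat.prime_dvd_prime_iff_eq pp h2).mp hd'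
        have : p + 1 = 12 * m := by omega
        rw [this]
        zify [e1, e2, e3]
        exact ⟨108 * (m : ℤ) ^ 2 - 33 * m + 3, by ring⟩
    · have hp1 : p = 18 * m - 1 := (Nat.prime_dvd_prime_iff_eq pp h3).mp hd
      have : p + 1 = 18 * m := by omega
      rw [this]
      zify [e1, e2, e3]
      exact ⟨72 * (m : ℤ) ^ 2 - 22 * m + 2, by ring⟩
end

section
/- Every Lucas-Carmichael integer n with exactly three prime factors can be written as n = (2h·r₁ − 1)(2h·r₂ − 1)(2h·r₃ − 1), where h is a positive integer and r₁, r₂, r₃ are pairwise coprime positive integers. -/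
theorem lucasCarmichael_three_factor_form (n : ℕ) (h : LucasCarmichael n)
    (h3 : n.primeFactors.card = 3) :
    ∃ h' r₁ r₂ r₃ : ℕ, 0 < h' ∧ 0 < r₁ ∧ 0 < r₂ ∧ 0 < r₃ ∧
      Nat.Coprime r₁ r₂ ∧ Nat.Coprime r₁ r₃ ∧ Nat.Coprime r₂ r₃ ∧
      n = (2 * h' * r₁ - 1) * (2 * h' * r₂ - 1) * (2 * h' * r₃ - 1) := by
  obtain ⟨sf, hn1, hnp, hdvdall⟩ := h
  obtain ⟨p₁, p₂, p₃, h12, h13, h23, hset⟩ := Finset.card_eq_three.mp h3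
  have hmem : ∀ p, p ∈ n.primeFactors ↔ p = p₁ ∨ p = p₂ ∨ p = p₃ := by
    intro p; rw [hset]; simp
  have hp1 : p₁.Prime := Nat.prime_of_mem_primeFactors (by rw [hset]; simp)
  have hp2 : p₂.Prime := Nat.prime_of_mem_primeFactors (by rw [hset]; simp)
  have hp3 : p₃.Prime := Nat.prime_of_mem_primeFactors (by rw [hset]; simp)
  have hd1 : p₁ ∣ n := Nat.dvd_of_mem_primeFactors (by rw [hset]; simp)
  have hd2 : p₂ ∣ n := Nat.dvd_of_mem_primeFactors (by rw [hset]; simp)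
  have hd3 : p₃ ∣ n := Nat.dvd_of_mem_primeFactors (by rw [hset]; simp)
  have hprod : p₁ * p₂ * p₃ = n := by
    have := Nat.prod_primeFactors_of_squarefree sf
    rw [hset, Finset.prod_insert (by simp [h12, h13]),
      Finset.prod_insert (by simp [h23]), Finset.prod_singleton, ← mul_assoc] at this
    exact this
  -- n is odd
  have h2n : ¬ 2 ∣ n := by
    intro h2n
    have h2p : (2 : ℕ) = p₁ ∨ (2 : ℕ) = p₂ ∨ (2 : ℕ) = p₃ :=
      (hmem 2).mp (Nat.mem_primeFactors.mpr ⟨Nat.prime_two, h2n, by omega⟩)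
    have key : ∀ q : ℕ, q.Prime → q ∣ n → q ≠ 2 → False := by
      intro q hq hqd hq2
      have : 2 ∣ q + 1 := by
        have := hq.two_le
        have hodd := hq.eq_one_or_self_of_dvd 2
        rcases Nat.even_or_odd q with he | ho
        · exact absurd ((Nat.Prime.even_iff hq).mp he) hq2
        · obtain ⟨k, hk⟩ := ho; omega
      have := this.trans (hdvdall q hq hqd)
      omega
    rcases h2p with h | h | h
    · exact key p₂ hp2 hd2 (by omega)
    · exact key p₁ hp1 hd1 (by omega)
    · exact key p₁ hp1 hd1 (by omega)
  have hodd : ∀ q : ℕ, q.Prime → q ∣ n → 2 ∣ q + 1 := by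
    intro q hq hqd
    rcases Nat.even_or_odd q with he | ho
    · exact absurd (((Nat.Prime.even_iff hq).mp he) ▸ hqd) h2n
    · obtain ⟨k, hk⟩ := ho; omega
  set g : ℕ := Nat.gcd (p₁ + 1) (Nat.gcd (p₂ + 1) (p₃ + 1)) with hg
  have hg1 : g ∣ p₁ + 1 := Nat.gcd_dvd_left _ _
  have hg2 : g ∣ p₂ + 1 := (Nat.gcd_dvd_right _ _).trans (Nat.gcd_dvd_left _ _)
  have hg3 : g ∣ p₃ + 1 := (Nat.gcd_dvd_right _ _).trans (Nat.gcd_dvd_right _ _)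
  have h2g : 2 ∣ g :=
    Nat.dvd_gcd (hodd _ hp1 hd1) (Nat.dvd_gcd (hodd _ hp2 hd2) (hodd _ hp3 hd3))
  have hgpos : 0 < g := Nat.pos_of_dvd_of_pos hg1 (by omega)
  -- key divisibility
  have key : ∀ a b c : ℕ, a * b * c = n → a + 1 ∣ n + 1 → b + 1 ∣ n + 1 →
      Nat.gcd (a + 1) (b + 1) ∣ c + 1 := by
    intro a b c habc ha hb
    set d := Nat.gcd (a + 1) (b + 1) with hd
    have hda : (d : ℤ) ∣ (a : ℤ) + 1 := by exact_mod_cast Int.natCast_dvd_natCast.mpr (Nat.gcd_dvd_left _ _)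
    have hdb : (d : ℤ) ∣ (b : ℤ) + 1 := by exact_mod_cast Int.natCast_dvd_natCast.mpr (Nat.gcd_dvd_right _ _)
    have hdn : (d : ℤ) ∣ (n : ℤ) + 1 := by
      have : d ∣ n + 1 := (Nat.gcd_dvd_left _ _).trans ha
      exact_mod_cast Int.natCast_dvd_natCast.mpr this
    have hcast : (a : ℤ) * b * c = n := by exact_mod_cast habc
    have heq : (c : ℤ) + 1 =
        ((n : ℤ) + 1) - (c : ℤ) * b * ((a : ℤ) + 1) + (c : ℤ) * ((b : ℤ) + 1) := by
      linear_combination hcast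
    have : (d : ℤ) ∣ (c : ℤ) + 1 := by
      rw [heq]
      exact dvd_add (dvd_sub hdn (hda.mul_left _)) (hdb.mul_left _)
    exact_mod_cast this
  have ha1 := hdvdall p₁ hp1 hd1
  have ha2 := hdvdall p₂ hp2 hd2
  have ha3 := hdvdall p₃ hp3 hd3
  have key12 : Nat.gcd (p₁ + 1) (p₂ + 1) ∣ p₃ + 1 := key p₁ p₂ p₃ hprod ha1 ha2
  have key13 : Nat.gcd (p₁ + 1) (p₃ + 1) ∣ p₂ + 1 := by
    apply key p₁ p₃ p₂ (by linarith [hprod, mul_comm p₂ p₃]) ha1 ha3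
  have key23 : Nat.gcd (p₂ + 1) (p₃ + 1) ∣ p₁ + 1 := by
    apply key p₂ p₃ p₁ _ ha2 ha3
    rw [← hprod]; ring
  -- all pairwise gcds equal g
  have e12 : Nat.gcd (p₁ + 1) (p₂ + 1) = g := by
    apply Nat.dvd_antisymm
    · exact Nat.dvd_gcd (Nat.gcd_dvd_left _ _) (Nat.dvd_gcd (Nat.gcd_dvd_right _ _) key12)
    · exact Nat.dvd_gcd hg1 hg2
  have e13 : Nat.gcd (p₁ + 1) (p₃ + 1) = g := by
    apply Nat.dvd_antisymm
    · exact Nat.dvd_gcd (Nat.gcd_dvd_left _ _) (Nat.dvd_gcd key13 (Nat.gcd_dvd_right _ _))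
    · exact Nat.dvd_gcd hg1 hg3
  have e23 : Nat.gcd (p₂ + 1) (p₃ + 1) = g := by
    apply Nat.dvd_antisymm
    · exact Nat.dvd_gcd key23 dvd_rfl
    · exact Nat.dvd_gcd hg2 hg3
  refine ⟨g / 2, (p₁ + 1) / g, (p₂ + 1) / g, (p₃ + 1) / g, ?_, ?_, ?_, ?_, ?_, ?_, ?_, ?_⟩
  · omega
  · exact Nat.div_pos (Nat.le_of_dvd (by omega) hg1) hgpos
  · exact Nat.div_pos (Nat.le_of_dvd (by omega) hg2) hgpos
  · exact Nat.div_pos (Nat.le_of_dvd (by omega) hg3) hgpos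
  · have := Nat.coprime_div_gcd_div_gcd (m := p₁ + 1) (n := p₂ + 1) (by rw [e12]; exact hgpos)
    rwa [e12] at this
  · have := Nat.coprime_div_gcd_div_gcd (m := p₁ + 1) (n := p₃ + 1) (by rw [e13]; exact hgpos)
    rwa [e13] at this
  · have := Nat.coprime_div_gcd_div_gcd (m := p₂ + 1) (n := p₃ + 1) (by rw [e23]; exact hgpos)
    rwa [e23] at this
  · have h2 : 2 * (g / 2) = g := Nat.mul_div_cancel' h2g
    have c1 : g * ((p₁ + 1) / g) = p₁ + 1 := Nat.mul_div_cancel' hg1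
    have c2 : g * ((p₂ + 1) / g) = p₂ + 1 := Nat.mul_div_cancel' hg2
    have c3 : g * ((p₃ + 1) / g) = p₃ + 1 := Nat.mul_div_cancel' hg3
    rw [h2, c1, c2, c3, Nat.add_sub_cancel, Nat.add_sub_cancel, Nat.add_sub_cancel]
    exact hprod.symm
end

section
/- Let p₁, …, p_l be distinct primes with l odd such that n = p₁⋯p_l is a Lucas-Carmichael integer. Let k₁ = gcd(p₁+1, …, p_l+1), rᵢ = (pᵢ+1)/k₁, and R = lcm(r₁, …, r_l). Then for every nonnegative integer m and every i, the product ∏_{j=1}^{l} (r_j·R·m + p_j) is congruent to −1 modulo r_i·R·m + p_i + 1. -/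
theorem universal_form_congruence (l : ℕ) (hl : Odd l) (p : Fin l → ℕ)
    (hp : ∀ i, (p i).Prime) (hinj : Function.Injective p)
    (hLC : LucasCarmichael (∏ i, p i))
    (k₁ : ℕ) (hk₁ : k₁ = Finset.univ.gcd (fun i => p i + 1))
    (r : Fin l → ℕ) (hr : ∀ i, r i = (p i + 1) / k₁)
    (R : ℕ) (hR : R = Finset.univ.lcm r)
    (m : ℕ) (i : Fin l) :
    (r i * R * m + p i + 1) ∣ (∏ j, (r j * R * m + p j)) + 1 := by
  classical
  have hk1dvd : ∀ j, k₁ ∣ p j + 1 := fun j => by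
    rw [hk₁]; exact Finset.gcd_dvd (Finset.mem_univ j)
  have hk1pos : 0 < k₁ := by
    rcases Nat.eq_zero_or_pos k₁ with h0 | h; swap
    · exact h
    · exfalso
      have := (Finset.gcd_eq_zero_iff.mp (hk₁ ▸ h0)) i (Finset.mem_univ i)
      simp at this
  have hrk : ∀ j, r j * k₁ = p j + 1 := fun j => by
    rw [hr]; exact Nat.div_mul_cancel (hk1dvd j)
  have hrR : ∀ j, r j ∣ R := fun j => hR ▸ Finset.dvd_lcm (Finset.mem_univ j)
  -- the polynomial
  set F : Polynomial ℤ := (∏ j, (Polynomial.C ((r j : ℤ)) * Polynomial.X - 1)) + 1 with hFdef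
  have hF0 : F.IsRoot 0 := by
    simp only [Polynomial.IsRoot, hFdef, Polynomial.eval_add, Polynomial.eval_prod,
      Polynomial.eval_sub, Polynomial.eval_mul, Polynomial.eval_C, Polynomial.eval_X,
      Polynomial.eval_one, mul_zero, zero_sub]
    rw [Finset.prod_const]
    simp [hl.neg_one_pow]
  have hXdvd : Polynomial.X ∣ F := by
    have := Polynomial.dvd_iff_isRoot.mpr hF0
    simpa using this
  obtain ⟨E, hE⟩ := hXdvd
  have hFeval : ∀ t : ℤ, F.eval t = t * E.eval t := fun t => by
    rw [hE]; simp
  have hFt : ∀ t : ℤ, F.eval t = (∏ j, ((r j : ℤ) * t - 1)) + 1 := fun t => by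
    simp [hFdef, Polynomial.eval_prod]
  -- value at k₁
  have hrkZ : ∀ j, (r j : ℤ) * (k₁ : ℤ) = (p j : ℤ) + 1 := fun j => by
    exact_mod_cast congrArg (Nat.cast : ℕ → ℤ) (hrk j)
  have hFk : F.eval (k₁ : ℤ) = (∏ j, (p j : ℤ)) + 1 := by
    rw [hFt]
    congr 1
    exact Finset.prod_congr rfl fun j _ => by rw [hrkZ j]; ring
  -- the LC divisibility
  have hLCd : (p i + 1 : ℕ) ∣ (∏ j, p j) + 1 :=
    hLC.2.2.2 (p i) (hp i) (Finset.dvd_prod_of_mem _ (Finset.mem_univ i))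
  have hLCdZ : ((r i : ℤ) * (k₁ : ℤ)) ∣ (k₁ : ℤ) * E.eval (k₁ : ℤ) := by
    rw [← hFeval, hFk, hrkZ]
    exact_mod_cast Int.natCast_dvd_natCast.mpr hLCd
  have hriEk : (r i : ℤ) ∣ E.eval (k₁ : ℤ) := by
    obtain ⟨c, hc⟩ := hLCdZ
    refine ⟨c, ?_⟩
    have hk1ne : (k₁ : ℤ) ≠ 0 := by exact_mod_cast hk1pos.ne'
    apply mul_left_cancel₀ hk1ne
    rw [hc]; ring
  -- now at t := R*m + k₁
  set t : ℤ := (R : ℤ) * m + k₁ with ht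
  have hriEt : (r i : ℤ) ∣ E.eval t := by
    have h1 : (t - (k₁ : ℤ)) ∣ E.eval t - E.eval (k₁ : ℤ) :=
      Polynomial.sub_dvd_eval_sub _ _ _
    have h2 : (r i : ℤ) ∣ t - (k₁ : ℤ) := by
      have : (r i : ℤ) ∣ (R : ℤ) := Int.natCast_dvd_natCast.mpr (hrR i)
      simpa [ht] using this.mul_right (m : ℤ)
    have h3 : (r i : ℤ) ∣ E.eval t - E.eval (k₁ : ℤ) := h2.trans h1
    have := dvd_add h3 hriEk
    simpa using this
  -- finish
  rw [← Int.natCast_dvd_natCast]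
  push_cast
  have hlhs : (r i : ℤ) * R * m + p i + 1 = (r i : ℤ) * t := by
    rw [ht]; linear_combination -hrkZ i
  have hrhs : (∏ j, ((r j : ℤ) * R * m + p j)) + 1 = t * E.eval t := by
    rw [← hFeval, hFt]
    congr 1
    refine Finset.prod_congr rfl fun j _ => ?_
    rw [ht, mul_add, hrkZ j]; ring
  rw [hlhs, hrhs, mul_comm ((r i : ℤ)) t]
  exact mul_dvd_mul_left _ hriEt
end

section
/- Let p₁, …, p_l be distinct primes with l odd such that p₁⋯p_l is a Lucas-Carmichael integer, k₁ = gcd(p₁+1, …, p_l+1), rᵢ = (pᵢ+1)/k₁, R = lcm(r₁, …, r_l). If m is a nonnegative integer such that r_i·R·m + p_i is prime for every i and these primes are distinct, then ∏_{i=1}^{l} (r_i·R·m + p_i) is a Lucas-Carmichael integer. -/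
open Polynomial in
theorem universal_form_lucasCarmichael (l : ℕ) (hl : Odd l) (p : Fin l → ℕ)
    (hp : ∀ i, (p i).Prime) (hinj : Function.Injective p)
    (hLC : LucasCarmichael (∏ i, p i))
    (k₁ : ℕ) (hk₁ : k₁ = Finset.univ.gcd (fun i => p i + 1))
    (r : Fin l → ℕ) (hr : ∀ i, r i = (p i + 1) / k₁)
    (R : ℕ) (hR : R = Finset.univ.lcm r)
    (m : ℕ)
    (hprime : ∀ i, (r i * R * m + p i).Prime)
    (hdist : Function.Injective (fun i => r i * R * m + p i)) :
    LucasCarmichael (∏ i, (r i * R * m + p i)) := by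
  set q : Fin l → ℕ := fun i => r i * R * m + p i with hq
  -- basic facts
  have hl1 : 1 ≤ l := by
    rcases hl with ⟨t, ht⟩; omega
  have hne : (Finset.univ : Finset (Fin l)).Nonempty := by
    refine Finset.univ_nonempty_iff.mpr ?_
    exact Fin.pos_iff_nonempty.mp hl1
  have hk₁dvd : ∀ i, k₁ ∣ p i + 1 := fun i => by
    rw [hk₁]; exact Finset.gcd_dvd (Finset.mem_univ i)
  have hk₁pos : 0 < k₁ := by
    rcases hne with ⟨i, _⟩
    rcases Nat.eq_zero_or_pos k₁ with h | h
    · have := hk₁dvd i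
      rw [h] at this
      simp at this
    · exact h
  have hrk : ∀ i, r i * k₁ = p i + 1 := fun i => by
    rw [hr i]; exact Nat.div_mul_cancel (hk₁dvd i)
  have hrpos : ∀ i, 0 < r i := fun i => by
    rcases Nat.eq_zero_or_pos (r i) with h | h
    · have := hrk i; rw [h] at this; simp at this
    · exact h
  have hrR : ∀ i, r i ∣ R := fun i => by
    rw [hR]; exact Finset.dvd_lcm (Finset.mem_univ i)
  have hqN : ∀ i, q i + 1 = r i * (R * m + k₁) := fun i => by
    have := hrk i
    simp only [hq]
    ring_nf
    omega
  have hqge : ∀ i, 2 ≤ q i := fun i => (hprime i).two_le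
  -- the key divisibility
  have key : ∀ i, q i + 1 ∣ (∏ j, q j) + 1 := by
    intro i
    -- work in ℤ with the polynomial f = ∏ (C (r j) * X - 1) + 1
    set f : ℤ[X] := (∏ j, (C (r j : ℤ) * X - 1)) + 1 with hf
    have hev : ∀ x : ℤ, f.eval x = (∏ j, ((r j : ℤ) * x - 1)) + 1 := by
      intro x; simp [hf, eval_prod]
    have hf0 : f.eval 0 = 0 := by
      rw [hev]
      simp [hl.neg_one_pow]
    obtain ⟨g, hg⟩ : X ∣ f := by
      rw [X_dvd_iff, coeff_zero_eq_eval_zero, hf0]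
    have hevg : ∀ x : ℤ, f.eval x = x * g.eval x := by
      intro x; rw [hg]; simp
    -- f.eval k₁ = ∏ p + 1
    have hfk : f.eval (k₁ : ℤ) = (∏ j, (p j : ℤ)) + 1 := by
      rw [hev]
      congr 1
      apply Finset.prod_congr rfl
      intro j _
      have h2 : (r j : ℤ) * (k₁ : ℤ) = (p j : ℤ) + 1 := by exact_mod_cast hrk j
      rw [h2]; ring
    -- r i divides g.eval k₁
    have hdvd1 : (r i : ℤ) ∣ g.eval (k₁ : ℤ) := by
      have hP : (p i + 1 : ℕ) ∣ (∏ j, p j) + 1 :=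
        hLC.2.2.2 (p i) (hp i) (Finset.dvd_prod_of_mem p (Finset.mem_univ i))
      have hPZ : ((k₁ : ℤ) * r i) ∣ (k₁ : ℤ) * g.eval (k₁ : ℤ) := by
        rw [← hevg, hfk]
        have h0 : ((p i + 1 : ℕ) : ℤ) ∣ (((∏ j, p j) + 1 : ℕ) : ℤ) :=
          Int.natCast_dvd_natCast.mpr hP
        push_cast at h0
        have h2 : (r i : ℤ) * (k₁ : ℤ) = (p i : ℤ) + 1 := by exact_mod_cast hrk i
        rw [mul_comm, h2]
        exact h0
      exact (mul_dvd_mul_iff_left (by exact_mod_cast hk₁pos.ne' : (k₁ : ℤ) ≠ 0)).mp hPZ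
    -- r i divides g.eval N where N = R*m + k₁
    set N : ℤ := (R : ℤ) * m + k₁ with hN
    have hdvd2 : (r i : ℤ) ∣ g.eval N := by
      have hsub : (N - k₁) ∣ g.eval N - g.eval (k₁ : ℤ) := sub_dvd_eval_sub N (k₁ : ℤ) g
      have hNk : N - (k₁ : ℤ) = (R : ℤ) * m := by rw [hN]; ring
      have hrdvd : (r i : ℤ) ∣ N - k₁ := by
        rw [hNk]
        exact Dvd.dvd.mul_right (Int.natCast_dvd_natCast.mpr (hrR i)) _
      simpa using dvd_add (hrdvd.trans hsub) hdvd1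
    -- conclude: (r i * N) ∣ f.eval N = ∏ q + 1
    have hfN : f.eval N = ((∏ j, q j : ℕ) : ℤ) + 1 := by
      rw [hev]
      push_cast
      congr 1
      apply Finset.prod_congr rfl
      intro j _
      have h2 : ((q j + 1 : ℕ) : ℤ) = ((r j * (R * m + k₁) : ℕ) : ℤ) := by
        exact_mod_cast congrArg (fun n : ℕ => (n : ℤ)) (hqN j)
      rw [hN]
      push_cast at h2 ⊢
      linarith
    have hfin : ((r i : ℤ) * N) ∣ ((∏ j, q j : ℕ) : ℤ) + 1 := by
      rw [← hfN, hevg]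
      rcases hdvd2 with ⟨c, hc⟩
      exact ⟨c, by rw [hc]; ring⟩
    have hqiN : ((q i + 1 : ℕ) : ℤ) = (r i : ℤ) * N := by
      have h2 : ((q i + 1 : ℕ) : ℤ) = ((r i * (R * m + k₁) : ℕ) : ℤ) := by
        exact_mod_cast congrArg (fun n : ℕ => (n : ℤ)) (hqN i)
      rw [hN]; push_cast at h2 ⊢; linarith
    have : ((q i + 1 : ℕ) : ℤ) ∣ (((∏ j, q j) + 1 : ℕ) : ℤ) := by
      have h3 : (((∏ j, q j) + 1 : ℕ) : ℤ) = ((∏ j, q j : ℕ) : ℤ) + 1 := by push_cast; ring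
      rw [hqiN, h3]; exact hfin
    exact_mod_cast this
  -- l ≥ 2 (in fact l ≥ 3): if l = 1 the product of p is prime, contradiction
  have hl2 : 2 ≤ l := by
    rcases Nat.lt_or_ge l 2 with h | h
    · have hl1' : l = 1 := by omega
      subst hl1'
      exact absurd ((by simp : (∏ i : Fin 1, p i) = p 0) ▸ hp 0) hLC.2.2.1
    · exact h
  -- squarefree: product of distinct primes
  have hsf : Squarefree (∏ i, q i) := by
    have : ∀ s : Finset (Fin l), Squarefree (∏ i ∈ s, q i) := by
      intro s
      induction s using Finset.induction with
      | empty => simp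
      | @insert a s hnotmem ih =>
        rw [Finset.prod_insert hnotmem, Nat.squarefree_mul_iff]
        refine ⟨?_, (hprime a).squarefree, ih⟩
        apply Nat.Coprime.prod_right
        intro j hj
        exact (Nat.coprime_primes (hprime a) (hprime j)).mpr
          (fun h => hnotmem (hdist h ▸ hj))
    exact this Finset.univ
  -- 1 < product
  have hgt : 1 < ∏ i, q i := by
    rcases hne with ⟨i, _⟩
    calc 1 < q i := hqge i
    _ ≤ ∏ j, q j := Finset.single_le_prod' (fun j _ => by have := hqge j; omega)
      (Finset.mem_univ i)
  -- not prime
  have hnp : ¬ (∏ i, q i).Prime := by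
    intro hPr
    obtain ⟨i, j, hij⟩ : ∃ i j : Fin l, i ≠ j := by
      refine ⟨⟨0, by omega⟩, ⟨1, by omega⟩, ?_⟩
      simp [Fin.ext_iff]
    have hdi : q i ∣ ∏ k, q k := Finset.dvd_prod_of_mem q (Finset.mem_univ i)
    have hdj : q j ∣ ∏ k, q k := Finset.dvd_prod_of_mem q (Finset.mem_univ j)
    have hi := (Nat.prime_dvd_prime_iff_eq (hprime i) hPr).mp hdi
    have hj := (Nat.prime_dvd_prime_iff_eq (hprime j) hPr).mp hdj
    exact hij (hdist (by simp only [hq] at hi hj ⊢; omega))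
  refine ⟨hsf, hgt, hnp, ?_⟩
  intro s hs hsdvd
  obtain ⟨i, _, hdvdi⟩ := hs.prime.exists_mem_finset_dvd hsdvd
  have : s = q i := (Nat.prime_dvd_prime_iff_eq hs (hprime i)).mp hdvdi
  rw [this]
  exact key i
end
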